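/- Let (X, Y) be a pair of discrete random variables and let (x, y_1, …, y_{N−1}) be drawn with x ~ p_X, y_1 ~ p_{Y|X=x} (positive sample), and y_2, …, y_{N−1} i.i.d. ~ p_Y (negative samples). Define the InfoNCE objective L_N = −E[ log( f(x,y_1) / Σ_{j=1}^{N-1} f(x,y_j) ) ] where f(x,y) = p(y|x)/p(y). Then I(X;Y) ≥ log(N−1) − L_N. -/

import Mathlib

open Finset

lemma infoNCE_prodsum {𝒴 : Type*} [Fintype 𝒴] (q : 𝒴 → ℝ) (hq1 : ∑ y, q y = 1) (m : ℕ) :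
    ∑ z : Fin m → 𝒴, ∏ i, q (z i) = 1 := by
  classical
  rw [← Fintype.piFinset_univ, ← Finset.prod_univ_sum (fun _ => Finset.univ) (fun _ y => q y)]
  simp [hq1]

lemma infoNCE_key {𝒴 : Type*} [Fintype 𝒴] (q : 𝒴 → ℝ) (hq : ∀ y, 0 ≤ q y)
    (hq1 : ∑ y, q y = 1) (g : 𝒴 → ℝ) (n : ℕ) :
    ∑ z : Fin (n+1) → 𝒴, (∏ i, q (z i)) * ((n+1) * g (z 0) / ∑ i, g (z i)) ≤ 1 := by
  classical
  have hswap : ∀ i : Fin (n+1),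
      ∑ z : Fin (n+1) → 𝒴, (∏ j, q (z j)) * (g (z i) / ∑ j, g (z j))
        = ∑ z : Fin (n+1) → 𝒴, (∏ j, q (z j)) * (g (z 0) / ∑ j, g (z j)) := by
    intro i
    apply Fintype.sum_equiv (Equiv.arrowCongr (Equiv.swap 0 i) (Equiv.refl 𝒴))
    intro z
    have h1 : ∀ h : 𝒴 → ℝ, (∑ j, h (z ((Equiv.swap 0 i).symm j))) = ∑ j, h (z j) := by
      intro h
      rw [Equiv.symm_swap]
      exact Equiv.sum_comp (Equiv.swap 0 i) (fun j => h (z j))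
    have h2 : ∀ h : 𝒴 → ℝ, (∏ j, h (z ((Equiv.swap 0 i).symm j))) = ∏ j, h (z j) := by
      intro h
      rw [Equiv.symm_swap]
      exact Equiv.prod_comp (Equiv.swap 0 i) (fun j => h (z j))
    simp only [Equiv.arrowCongr_apply, Function.comp, Equiv.refl_apply]
    rw [h1, h2, Equiv.symm_swap, Equiv.swap_apply_left]
  have hcard : (Finset.univ : Finset (Fin (n+1))).card = n + 1 := by simp
  calc ∑ z : Fin (n+1) → 𝒴, (∏ i, q (z i)) * ((n+1) * g (z 0) / ∑ i, g (z i))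
      = ∑ i : Fin (n+1), ∑ z : Fin (n+1) → 𝒴, (∏ j, q (z j)) * (g (z i) / ∑ j, g (z j)) := by
        rw [Finset.sum_congr rfl (fun i _ => hswap i)]
        rw [Finset.sum_const, hcard]
        rw [← Finset.sum_nsmul]
        apply Finset.sum_congr rfl
        intro z _
        push_cast [nsmul_eq_mul]
        ring
    _ = ∑ z : Fin (n+1) → 𝒴, (∏ j, q (z j)) * ((∑ i, g (z i)) / ∑ j, g (z j)) := by
        rw [Finset.sum_comm]
        apply Finset.sum_congr rfl
        intro z _
        rw [← Finset.mul_sum, ← Finset.sum_div]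
    _ ≤ ∑ z : Fin (n+1) → 𝒴, ∏ j, q (z j) := by
        apply Finset.sum_le_sum
        intro z _
        have hW : 0 ≤ ∏ j, q (z j) := Finset.prod_nonneg fun j _ => hq _
        have : (∑ i, g (z i)) / (∑ j, g (z j)) ≤ 1 := by
          rcases eq_or_ne (∑ j, g (z j)) 0 with h | h
          · simp [h]
          · rw [div_self h]
        calc (∏ j, q (z j)) * ((∑ i, g (z i)) / ∑ j, g (z j)) ≤ (∏ j, q (z j)) * 1 :=
              mul_le_mul_of_nonneg_left this hW
          _ = ∏ j, q (z j) := mul_one _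
    _ = 1 := infoNCE_prodsum q hq1 (n+1)

lemma infoNCE_reindex {𝒴 : Type*} [Fintype 𝒴] (k : ℕ) (G : 𝒴 → (Fin k → 𝒴) → ℝ) :
    ∑ y1, ∑ ys : Fin k → 𝒴, G y1 ys = ∑ z : Fin (k+1) → 𝒴, G (z 0) (fun j => z j.succ) := by
  have h1 : ∑ z : Fin (k+1) → 𝒴, G (z 0) (fun j => z j.succ)
      = ∑ pq : 𝒴 × (Fin k → 𝒴), G pq.1 pq.2 :=
    Fintype.sum_equiv (Fin.insertNthEquiv (fun _ => 𝒴) 0).symm _ _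
      (fun z => by simp only [Fin.insertNthEquiv, Equiv.coe_fn_symm_mk]; rfl)
  rw [h1, Fintype.sum_prod_type]


/-- **InfoNCE lower bound (van den Oord et al.).** With one positive sample drawn from
`p(y|x)` and `k` i.i.d. negative samples from `p_Y`, using the density-ratio critic
`f(x,y) = p(y|x)/p(y)`, the InfoNCE loss `L` satisfies `I(X;Y) ≥ log(N−1) − L` where
`N − 1 = k + 1` is the number of samples in the denominator. -/
theorem stmt_9 {𝒳 𝒴 : Type*} [Fintype 𝒳] [Fintype 𝒴]
    (p : 𝒳 → 𝒴 → ℝ) (hp : ∀ x y, 0 ≤ p x y) (hp1 : ∑ x, ∑ y, p x y = 1)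
    (hpX : ∀ x, 0 < ∑ y, p x y) (hpY : ∀ y, 0 < ∑ x, p x y)
    (k : ℕ)
    (f : 𝒳 → 𝒴 → ℝ)
    (hf : ∀ x y, f x y = p x y / ((∑ y', p x y') * (∑ x', p x' y)))
    (L : ℝ)
    (hL : L = -(∑ x, ∑ y1, ∑ ys : Fin k → 𝒴,
      (p x y1 * ∏ j, (∑ x', p x' (ys j))) *
        Real.log (f x y1 / (f x y1 + ∑ j, f x (ys j))))) :
    ∑ x, ∑ y, p x y * Real.log (p x y / ((∑ y', p x y') * (∑ x', p x' y)))
      ≥ Real.log (k + 1) - L := by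
  classical
  have hPY1 : ∑ y, ∑ x, p x y = 1 := by rw [Finset.sum_comm]; exact hp1
  have hfnn : ∀ x y, 0 ≤ f x y := fun x y => by
    rw [hf]; exact div_nonneg (hp x y) (mul_nonneg (hpX x).le (hpY y).le)
  have hpf : ∀ x y, p x y = f x y * ((∑ y', p x y') * (∑ x', p x' y)) := fun x y => by
    have hD : ((∑ y', p x y') * (∑ x', p x' y)) ≠ 0 :=
      mul_ne_zero (hpX x).ne' (hpY y).ne'
    rw [hf, div_mul_cancel₀ _ hD]
  have hfpos : ∀ x y, 0 < p x y → 0 < f x y := fun x y h => by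
    rw [hf]; exact div_pos h (mul_pos (hpX x) (hpY y))
  have hprod1 : ∑ ys : Fin k → 𝒴, ∏ j, (∑ x', p x' (ys j)) = 1 :=
    infoNCE_prodsum (fun y => ∑ x', p x' y) hPY1 k
  -- weights
  set w : 𝒳 → 𝒴 → (Fin k → 𝒴) → ℝ :=
    fun x y1 ys => p x y1 * ∏ j, (∑ x', p x' (ys j)) with hw
  have hw' : ∀ x y1 ys, w x y1 ys = p x y1 * ∏ j, (∑ x', p x' (ys j)) :=
    fun _ _ _ => rfl
  have hwnn : ∀ x y1 ys, 0 ≤ w x y1 ys := fun x y1 ys =>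
    mul_nonneg (hp x y1) (Finset.prod_nonneg fun j _ => (hpY _).le)
  have hwsum : ∑ x, ∑ y1, ∑ ys : Fin k → 𝒴, w x y1 ys = 1 := by
    simp only [hw, ← Finset.mul_sum, hprod1, mul_one]
    exact hp1
  have hconst : ∀ c : ℝ, ∑ x, ∑ y1, ∑ ys : Fin k → 𝒴, w x y1 ys * c = c := by
    intro c
    rw [show (∑ x, ∑ y1, ∑ ys : Fin k → 𝒴, w x y1 ys * c)
        = (∑ x, ∑ y1, ∑ ys : Fin k → 𝒴, w x y1 ys) * c by simp [Finset.sum_mul],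
      hwsum, one_mul]
  -- the main bound:  U ≤ 1
  have hU : ∑ x, ∑ y1, ∑ ys : Fin k → 𝒴,
      w x y1 ys * ((k+1) / (f x y1 + ∑ j, f x (ys j))) ≤ 1 := by
    have hx : ∀ x, ∑ y1, ∑ ys : Fin k → 𝒴,
        w x y1 ys * ((k+1) / (f x y1 + ∑ j, f x (ys j)))
        ≤ (∑ y', p x y') * 1 := by
      intro x
      have hstep : ∑ y1, ∑ ys : Fin k → 𝒴,
          w x y1 ys * ((k+1) / (f x y1 + ∑ j, f x (ys j)))
          = (∑ y', p x y') * ∑ y1, ∑ ys : Fin k → 𝒴,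
              ((∑ x', p x' y1) * ∏ j, (∑ x', p x' (ys j))) *
                ((k+1) * f x y1 / (f x y1 + ∑ j, f x (ys j))) := by
        simp only [Finset.mul_sum]
        refine Finset.sum_congr rfl fun y1 _ => Finset.sum_congr rfl fun ys _ => ?_
        rw [hw' x y1 ys, hpf x y1]
        ring
      rw [hstep]
      refine mul_le_mul_of_nonneg_left ?_ (hpX x).le
      rw [infoNCE_reindex k (fun y1 ys => ((∑ x', p x' y1) * ∏ j, (∑ x', p x' (ys j))) *
        ((k+1) * f x y1 / (f x y1 + ∑ j, f x (ys j))))]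
      have hkey := infoNCE_key (fun y => ∑ x', p x' y) (fun y => (hpY y).le) hPY1 (f x) k
      simp only [Fin.prod_univ_succ, Fin.sum_univ_succ] at hkey
      exact hkey
    calc ∑ x, ∑ y1, ∑ ys : Fin k → 𝒴,
        w x y1 ys * ((k+1) / (f x y1 + ∑ j, f x (ys j)))
        ≤ ∑ x, (∑ y', p x y') * 1 := Finset.sum_le_sum fun x _ => hx x
      _ = 1 := by simp only [mul_one]; exact hp1
  -- pointwise inequality
  have hpt : ∀ x y1 (ys : Fin k → 𝒴),
      w x y1 ys * (Real.log (k+1) + 1) - w x y1 ys * ((k+1) / (f x y1 + ∑ j, f x (ys j)))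
      ≤ w x y1 ys * Real.log (f x y1)
        - w x y1 ys * Real.log (f x y1 / (f x y1 + ∑ j, f x (ys j))) := by
    intro x y1 ys
    rcases eq_or_lt_of_le (hwnn x y1 ys) with h0 | h0
    · rw [← h0]; simp
    · have hpxy : 0 < p x y1 := by
        rcases (hp x y1).lt_or_eq with h | h
        · exact h
        · exfalso; rw [hw' x y1 ys, ← h] at h0; simp at h0
      have hf1 : 0 < f x y1 := hfpos x y1 hpxy
      have hS : 0 < f x y1 + ∑ j, f x (ys j) :=
        add_pos_of_pos_of_nonneg hf1 (Finset.sum_nonneg fun j _ => hfnn x _)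
      have hlog : Real.log (k+1) + 1 - (k+1) / (f x y1 + ∑ j, f x (ys j))
          ≤ Real.log (f x y1) - Real.log (f x y1 / (f x y1 + ∑ j, f x (ys j))) := by
        rw [Real.log_div hf1.ne' hS.ne']
        have hr : (0:ℝ) < (k+1) / (f x y1 + ∑ j, f x (ys j)) := by positivity
        have := Real.log_le_sub_one_of_pos hr
        rw [Real.log_div (by positivity) hS.ne'] at this
        have hlogk : Real.log ((k:ℝ)+1) = Real.log (k+1) := by norm_num
        linarith
      have := mul_le_mul_of_nonneg_left hlog h0.le
      calc w x y1 ys * (Real.log (k+1) + 1)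
            - w x y1 ys * ((k+1) / (f x y1 + ∑ j, f x (ys j)))
          = w x y1 ys * (Real.log (k+1) + 1 - (k+1) / (f x y1 + ∑ j, f x (ys j))) := by ring
        _ ≤ w x y1 ys * (Real.log (f x y1)
              - Real.log (f x y1 / (f x y1 + ∑ j, f x (ys j)))) := this
        _ = w x y1 ys * Real.log (f x y1)
              - w x y1 ys * Real.log (f x y1 / (f x y1 + ∑ j, f x (ys j))) := by ring
  -- assemble
  rw [ge_iff_le, sub_le_iff_le_add, hL]
  have hIeq : ∑ x, ∑ y, p x y * Real.log (p x y / ((∑ y', p x y') * (∑ x', p x' y)))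
      = ∑ x, ∑ y1, ∑ ys : Fin k → 𝒴, w x y1 ys * Real.log (f x y1) := by
    refine Finset.sum_congr rfl fun x _ => Finset.sum_congr rfl fun y _ => ?_
    rw [← hf, hw]
    simp only [← Finset.sum_mul, ← Finset.mul_sum, hprod1, mul_one]
  rw [hIeq]
  have hsplit : ∑ x, ∑ y1, ∑ ys : Fin k → 𝒴, w x y1 ys * Real.log (f x y1)
      + -(∑ x, ∑ y1, ∑ ys : Fin k → 𝒴, w x y1 ys *
          Real.log (f x y1 / (f x y1 + ∑ j, f x (ys j))))
      = ∑ x, ∑ y1, ∑ ys : Fin k → 𝒴,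
          (w x y1 ys * Real.log (f x y1)
            - w x y1 ys * Real.log (f x y1 / (f x y1 + ∑ j, f x (ys j)))) := by
    rw [← sub_eq_add_neg, ← Finset.sum_sub_distrib]
    refine Finset.sum_congr rfl fun x _ => ?_
    rw [← Finset.sum_sub_distrib]
    refine Finset.sum_congr rfl fun y1 _ => ?_
    rw [← Finset.sum_sub_distrib]
  rw [hsplit]
  calc Real.log ((k:ℝ)+1)
      = (Real.log (k+1) + 1) - 1 := by ring
    _ ≤ (Real.log (k+1) + 1) - ∑ x, ∑ y1, ∑ ys : Fin k → 𝒴,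
          w x y1 ys * ((k+1) / (f x y1 + ∑ j, f x (ys j))) := by linarith
    _ = ∑ x, ∑ y1, ∑ ys : Fin k → 𝒴,
          (w x y1 ys * (Real.log (k+1) + 1)
            - w x y1 ys * ((k+1) / (f x y1 + ∑ j, f x (ys j)))) := by
        rw [show (∑ x, ∑ y1, ∑ ys : Fin k → 𝒴,
            (w x y1 ys * (Real.log (k+1) + 1)
              - w x y1 ys * ((k+1) / (f x y1 + ∑ j, f x (ys j)))))
          = (∑ x, ∑ y1, ∑ ys : Fin k → 𝒴, w x y1 ys * (Real.log (k+1) + 1))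
            - ∑ x, ∑ y1, ∑ ys : Fin k → 𝒴,
              w x y1 ys * ((k+1) / (f x y1 + ∑ j, f x (ys j))) by
            simp [Finset.sum_sub_distrib]]
        rw [hconst (Real.log (k+1) + 1)]
    _ ≤ ∑ x, ∑ y1, ∑ ys : Fin k → 𝒴,
          (w x y1 ys * Real.log (f x y1)
            - w x y1 ys * Real.log (f x y1 / (f x y1 + ∑ j, f x (ys j)))) := by
        refine Finset.sum_le_sum fun x _ => Finset.sum_le_sum fun y1 _ =>
          Finset.sum_le_sum fun ys _ => hpt x y1 ys
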